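/- arXiv:2509.01953 — 5 statements merged into one kernel-verified Lean document; each statement's English description precedes it below -/
import Mathlib

section
/- Structural barrier under rank-order mechanism: Suppose n incumbent players each play quality distributed according to CDF F_n satisfying h_n(α^n, F_n(q)) = c(q) on its support, with rewards α^n and cost c. If a new (n+1)-st player enters and the new rewards satisfy α^{n+1}_i ≤ α^n_i for 1 ≤ i ≤ n and α^{n+1}_{n+1} = 0, then the new entrant's expected reward g_{n+1}(q) = h_{n+1}(α^{n+1}, F_n(q))-type expression satisfies g_{n+1}(q) ≤ c(q) for all q ∈ [0,1], with strict inequality whenever 0 < F_n(q) < 1. Hence the entrant cannot achieve positive expected profit at any quality level. -/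
/-!
The entrant's reward splits along Pascal's rule according to whether she beats one fixed
incumbent: `g_{n+1}(t) = t · h_n(β, t) + (1 - t) · h_n(β ∘ succ, t)`. Both new reward vectors
`β` and the shifted `β ∘ succ` are dominated by `α`, because `α` is nonincreasing and `β_n = 0`,
so `g_{n+1}(t) ≤ h_n(α, t) ≤ c`. Since `α` falls from `α_0 > 0` to `α_{n-1} = 0`, it drops
strictly somewhere, the shifted rewards are strictly below `α` there, and for `0 < t < 1` all
Bernstein weights are positive, which makes the inequality strict.
-/

open Finset

/-- `h_n(α,t)`: expected reward at quantile `t` facing `n-1` opponents, rewards `α` 0-indexed. -/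
noncomputable def hFun (n : ℕ) (α : ℕ → ℝ) (t : ℝ) : ℝ :=
  ∑ i ∈ Finset.range n, α i * (Nat.choose (n - 1) i : ℝ) * t ^ (n - 1 - i) * (1 - t) ^ i

/-- Expected reward of a new entrant of quality-quantile `t` facing `n` incumbents,
under `(n+1)`-player rewards `β` (0-indexed): `Σ_{i=0}^{n} β_{i+1} C(n,i) t^{n-i}(1-t)^i`. -/
noncomputable def gFun (n : ℕ) (β : ℕ → ℝ) (t : ℝ) : ℝ :=
  ∑ i ∈ Finset.range (n + 1), β i * (Nat.choose n i : ℝ) * t ^ (n - i) * (1 - t) ^ i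

lemma exists_apply_succ_lt_apply {γ : Type*} [LinearOrder γ] {f : ℕ → γ} {m : ℕ}
    (h : f m < f 0) : ∃ k < m, f (k + 1) < f k := by
  induction m with
  | zero => exact absurd h (lt_irrefl _)
  | succ m ih =>
    by_cases hm : f (m + 1) < f m
    · exact ⟨m, m.lt_succ_self, hm⟩
    · obtain ⟨k, hk, hfk⟩ := ih ((not_lt.1 hm).trans_lt h)
      exact ⟨k, hk.trans m.lt_succ_self, hfk⟩

lemma gFun_succ (m : ℕ) (β : ℕ → ℝ) (t : ℝ) :
    gFun (m + 1) β t = t * hFun (m + 1) β t + (1 - t) * hFun (m + 1) (fun i => β (i + 1)) t := by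
  have pascal : ∀ i ∈ range m,
      β (i + 1) * ((m + 1).choose (i + 1) : ℝ) * t ^ (m + 1 - (i + 1)) * (1 - t) ^ (i + 1)
        = t * (β (i + 1) * (m.choose (i + 1) : ℝ) * t ^ (m - (i + 1)) * (1 - t) ^ (i + 1))
          + (1 - t) * (β (i + 1) * (m.choose i : ℝ) * t ^ (m - i) * (1 - t) ^ i) := by
    intro i hi
    have hm : m - i = m - (i + 1) + 1 := by have := mem_range.1 hi; omega
    rw [Nat.add_sub_add_right, hm, Nat.choose_succ_succ']
    push_cast
    ring
  unfold gFun hFun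
  rw [sum_range_succ, sum_range_succ', sum_congr rfl pascal, sum_add_distrib,
    Nat.add_sub_cancel, sum_range_succ' _ m, sum_range_succ _ m, mul_add, mul_add,
    mul_sum, mul_sum]
  simp only [Nat.choose_self, Nat.choose_zero_right, Nat.sub_self, Nat.sub_zero]
  ring

section Comparison

variable {n : ℕ} {γ δ : ℕ → ℝ} {t : ℝ}

lemma hFun_le_hFun (h : ∀ i < n, γ i ≤ δ i) (ht₀ : 0 ≤ t) (ht₁ : t ≤ 1) :
    hFun n γ t ≤ hFun n δ t :=
  sum_le_sum fun i hi => by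
    have := h i (mem_range.1 hi)
    have := sub_nonneg.2 ht₁
    gcongr

lemma hFun_lt_hFun (h : ∀ i < n, γ i ≤ δ i) {k : ℕ} (hk : k < n) (hlt : γ k < δ k)
    (ht₀ : 0 < t) (ht₁ : t < 1) : hFun n γ t < hFun n δ t := by
  refine sum_lt_sum (fun i hi => ?_) ⟨k, mem_range.2 hk, ?_⟩
  · have := h i (mem_range.1 hi)
    have := sub_nonneg.2 ht₁.le
    gcongr
  · have : (0 : ℝ) < (n - 1).choose k := by exact_mod_cast Nat.choose_pos (by omega)
    have := sub_pos.2 ht₁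
    gcongr

end Comparison

section Entrant

variable {m : ℕ} {α β : ℕ → ℝ} {t : ℝ}

lemma gFun_succ_le_hFun (hβ : ∀ i < m + 1, β i ≤ α i)
    (hshift : ∀ i < m + 1, β (i + 1) ≤ α i) (ht₀ : 0 ≤ t) (ht₁ : t ≤ 1) :
    gFun (m + 1) β t ≤ hFun (m + 1) α t :=
  calc gFun (m + 1) β t
      = t * hFun (m + 1) β t + (1 - t) * hFun (m + 1) (fun i => β (i + 1)) t := gFun_succ m β t
    _ ≤ t * hFun (m + 1) α t + (1 - t) * hFun (m + 1) α t := by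
      have := sub_nonneg.2 ht₁
      gcongr
      exacts [hFun_le_hFun hβ ht₀ ht₁, hFun_le_hFun hshift ht₀ ht₁]
    _ = hFun (m + 1) α t := by ring

lemma gFun_succ_lt_hFun (hβ : ∀ i < m + 1, β i ≤ α i)
    (hshift : ∀ i < m + 1, β (i + 1) ≤ α i) {k : ℕ} (hk : k < m + 1) (hlt : β (k + 1) < α k)
    (ht₀ : 0 < t) (ht₁ : t < 1) : gFun (m + 1) β t < hFun (m + 1) α t :=
  calc gFun (m + 1) β t
      = t * hFun (m + 1) β t + (1 - t) * hFun (m + 1) (fun i => β (i + 1)) t := gFun_succ m β t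
    _ < t * hFun (m + 1) α t + (1 - t) * hFun (m + 1) α t := by
      have := sub_pos.2 ht₁
      exact add_lt_add_of_le_of_lt (by gcongr; exact hFun_le_hFun hβ ht₀.le ht₁.le)
        (by gcongr; exact hFun_lt_hFun hshift hk hlt ht₀ ht₁)
    _ = hFun (m + 1) α t := by ring

end Entrant

theorem structural_barrier_rank_order_general
    (n : ℕ) (hn : 2 ≤ n) (α β : ℕ → ℝ) (c F : ℝ → ℝ)
    (hαmono : ∀ i j, i ≤ j → j < n → α j ≤ α i)
    (hαnonneg : ∀ i, 0 ≤ α i) (hαlast : α (n - 1) = 0) (hαpos : 0 < α 0)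
    (hβ : ∀ i < n, β i ≤ α i) (hβlast : β n = 0)
    (hF : ∀ q ∈ Set.Icc (0:ℝ) 1, 0 ≤ F q ∧ F q ≤ 1)
    (heq : ∀ q ∈ Set.Icc (0:ℝ) 1, F q < 1 → hFun n α (F q) = c q)
    (hle : ∀ q ∈ Set.Icc (0:ℝ) 1, hFun n α (F q) ≤ c q) :
    ∀ q ∈ Set.Icc (0:ℝ) 1,
      gFun n β (F q) ≤ c q ∧ (0 < F q → F q < 1 → gFun n β (F q) < c q) := by
  obtain ⟨m, rfl⟩ : ∃ m, n = m + 1 := ⟨n - 1, by omega⟩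
  have hshift : ∀ i < m + 1, β (i + 1) ≤ α i := by
    intro i hi
    rcases (show i + 1 < m + 1 ∨ i = m by omega) with hi | rfl
    · exact (hβ _ hi).trans (hαmono i (i + 1) i.le_succ hi)
    · exact hβlast ▸ hαnonneg i
  have hαm : α m = 0 := hαlast
  obtain ⟨k, hk, hdrop⟩ := exists_apply_succ_lt_apply (f := α) (m := m) (hαm ▸ hαpos)
  intro q hq
  obtain ⟨hF₀, hF₁⟩ := hF q hq
  refine ⟨(gFun_succ_le_hFun hβ hshift hF₀ hF₁).trans (hle q hq), fun hpos hlt => ?_⟩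
  calc gFun (m + 1) β (F q) < hFun (m + 1) α (F q) :=
        gFun_succ_lt_hFun hβ hshift (hk.trans m.lt_succ_self)
          ((hβ (k + 1) (by omega)).trans_lt hdrop) hpos hlt
    _ = c q := heq q hq hlt

/-- Structural barrier under the rank-order mechanism: if the `n` incumbents play the
symmetric equilibrium CDF `F` (so `h_n(α, F q) = c q` on the support, `h_n(α, F q) ≤ c q`
everywhere), and the new `(n+1)`-player rewards `β` satisfy `β i ≤ α i` for `i < n` and
`β n = 0`, then the entrant's expected reward satisfies `g_{n+1}(q) ≤ c q` for all
`q ∈ [0,1]`, strictly whenever `0 < F q < 1`: the entrant cannot make a positive profit. -/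
theorem structural_barrier_rank_order
    (n : ℕ) (hn : 2 ≤ n) (α β : ℕ → ℝ) (c F : ℝ → ℝ)
    (hαmono : ∀ i j, i ≤ j → j < n → α j ≤ α i)
    (hαnonneg : ∀ i, 0 ≤ α i) (hαlast : α (n - 1) = 0) (hαpos : 0 < α 0)
    (hβ : ∀ i < n, β i ≤ α i) (hβlast : β n = 0) (hβnonneg : ∀ i, 0 ≤ β i)
    (hcmono : StrictMonoOn c (Set.Icc (0:ℝ) 1)) (hc0 : c 0 = 0) (hc1 : 1 < c 1)
    (hF : ∀ q ∈ Set.Icc (0:ℝ) 1, 0 ≤ F q ∧ F q ≤ 1)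
    (heq : ∀ q ∈ Set.Icc (0:ℝ) 1, F q < 1 → hFun n α (F q) = c q)
    (hle : ∀ q ∈ Set.Icc (0:ℝ) 1, hFun n α (F q) ≤ c q) :
    ∀ q ∈ Set.Icc (0:ℝ) 1,
      gFun n β (F q) ≤ c q ∧ (0 < F q → F q < 1 → gFun n β (F q) < c q) :=
  structural_barrier_rank_order_general n hn α β c F hαmono hαnonneg hαlast hαpos hβ hβlast hF heq
    hle
end

section
/- Sufficient condition for a contributing equilibrium under the proportional mechanism: if c_j'(0) / Σ_{i=1}^n c_i'(0) < 1/(n−1) for all j (or all c_j'(0) = 0), then there exists a Nash equilibrium in which every player's quality is strictly positive. -/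
/-!
Write `f_i = c_i'` and `S` for the total quality. For a fixed total `S`, player `i`'s first-order
condition `(S - q_i) / S² = f_i(q_i)` has at most one root `q_i(S) ∈ [0, 1]` (take `0` if there is
none), and `q_i(S)` depends continuously on `S` because `f_i` is monotone and, by Darboux's theorem,
continuous. For small `S` each `q_i(S) ≥ S / 2`, so `Σ q_i(S) ≥ S`, while `Σ q_i(n) ≤ n`; the
intermediate value theorem gives a consistent total `S = Σ q_i(S)`. If some `q_j(S)` vanished, then
`S ≤ S² f_j(0)` for the idle players and `S² f_i(0) ≤ S - q_i` for the others, and summing these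
contradicts `(n - 1) f_j(0) < Σ_i f_i(0)`. Finally each player's utility is concave in her own
quality, so the first-order conditions make the profile a Nash equilibrium.
-/

open Finset

/-- Utility under the proportional mechanism: `q_i / Σ_j q_j − c_i(q_i)`. -/
noncomputable def pmUtility {n : ℕ} (c : Fin n → ℝ → ℝ) (q : Fin n → ℝ) (i : Fin n) : ℝ :=
  q i / (∑ j, q j) - c i (q i)

open Set Filter Topology

theorem MonotoneOn.eventually_gt_of_ordConnected_image {α β : Type*} [LinearOrder α]
    [TopologicalSpace α] [OrderTopology α] [LinearOrder β] [DenselyOrdered β] {f : α → β}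
    {s : Set α} {a : α} {b : β} (hf : MonotoneOn f s) (hfs : (f '' s).OrdConnected)
    (ha : a ∈ s) (hb : b < f a) : ∀ᶠ x in 𝓝[s] a, b < f x := by
  by_cases hbelow : ∃ y ∈ s, f y ≤ b
  · obtain ⟨y, hy, hyb⟩ := hbelow
    obtain ⟨m, hbm, hma⟩ := exists_between hb
    obtain ⟨c, hc, rfl⟩ := hfs.out (mem_image_of_mem f hy) (mem_image_of_mem f ha)
      ⟨hyb.trans hbm.le, hma.le⟩
    have hca : c < a := lt_of_not_ge fun hac => hma.not_ge (hf ha hc hac)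
    filter_upwards [mem_nhdsWithin_of_mem_nhds (Ioi_mem_nhds hca), self_mem_nhdsWithin]
      with x hcx hx using hbm.trans_le (hf hc hx (le_of_lt hcx))
  · push Not at hbelow
    filter_upwards [self_mem_nhdsWithin] with x hx using hbelow x hx

theorem MonotoneOn.continuousOn_of_ordConnected_image {α β : Type*} [LinearOrder α]
    [TopologicalSpace α] [OrderTopology α] [LinearOrder β] [TopologicalSpace β] [OrderTopology β]
    [DenselyOrdered β] {f : α → β} {s : Set α} (hf : MonotoneOn f s)
    (hfs : (f '' s).OrdConnected) : ContinuousOn f s := fun _ ha =>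
  tendsto_order.2 ⟨fun _ hb => hf.eventually_gt_of_ordConnected_image hfs ha hb,
    fun _ hb => hf.dual.eventually_gt_of_ordConnected_image (β := βᵒᵈ) hfs.dual ha hb⟩

theorem ConvexOn.continuousOn_derivWithin {s : Set ℝ} {c : ℝ → ℝ} (hc : ConvexOn ℝ s c)
    (hd : DifferentiableOn ℝ c s) : ContinuousOn (derivWithin c s) s :=
  (hc.monotoneOn_derivWithin hd).continuousOn_of_ordConnected_image
    (hc.1.ordConnected.image_derivWithin hd)

theorem ConvexOn.derivWithin_mul_sub_le {s : Set ℝ} {c : ℝ → ℝ} {x y : ℝ} (hc : ConvexOn ℝ s c)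
    (hx : x ∈ s) (hy : y ∈ s) (hd : DifferentiableWithinAt ℝ c s x) :
    derivWithin c s x * (y - x) ≤ c y - c x := by
  rcases lt_trichotomy x y with hxy | rfl | hyx
  · have := hc.derivWithin_le_slope hx hy hxy hd
    rwa [slope_def_field, le_div_iff₀ (sub_pos.2 hxy)] at this
  · simp
  · have := hc.slope_le_derivWithin hy hx hyx hd
    rw [slope_def_field, div_le_iff₀ (sub_pos.2 hyx)] at this
    linarith

/-- For a player with marginal cost `f` when the total quality is `S`, the root of the
first-order condition `(S - x) / S² = f x` in `[0, 1]`, or `0` if there is none. -/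
noncomputable def aggregateResponse (f : ℝ → ℝ) (S : ℝ) : ℝ :=
  sSup {x ∈ Icc (0 : ℝ) 1 | x + S ^ 2 * f x ≤ S}

section aggregateResponse

variable {f : ℝ → ℝ} {S x : ℝ}

theorem aggregateResponse_nonneg : 0 ≤ aggregateResponse f S :=
  Real.sSup_nonneg fun _ hx => hx.1.1

theorem aggregateResponse_le_one : aggregateResponse f S ≤ 1 :=
  Real.sSup_le (fun _ hx => hx.1.2) zero_le_one

theorem aggregateResponse_mem_Icc : aggregateResponse f S ∈ Icc (0 : ℝ) 1 :=
  ⟨aggregateResponse_nonneg, aggregateResponse_le_one⟩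

theorem le_aggregateResponse (hx : x ∈ Icc (0 : ℝ) 1) (hxS : x + S ^ 2 * f x ≤ S) :
    x ≤ aggregateResponse f S :=
  le_csSup (bddAbove_Icc.mono (sep_subset _ _)) ⟨hx, hxS⟩

theorem aggregateResponse_le (hf : MonotoneOn f (Icc 0 1)) (hx : x ∈ Icc (0 : ℝ) 1)
    (hxS : S < x + S ^ 2 * f x) : aggregateResponse f S ≤ x := by
  refine Real.sSup_le (fun y ⟨hy, hyS⟩ => le_of_not_gt fun hxy => ?_) hx.1
  have := mul_le_mul_of_nonneg_left (hf hx hy hxy.le) (sq_nonneg S)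
  linarith

theorem aggregateResponse_add_sq_mul_le (hf : ContinuousOn f (Icc 0 1))
    (hpos : 0 < aggregateResponse f S) :
    aggregateResponse f S + S ^ 2 * f (aggregateResponse f S) ≤ S := by
  have hclosed : IsClosed {x ∈ Icc (0 : ℝ) 1 | x + S ^ 2 * f x ≤ S} :=
    (continuousOn_id.add (continuousOn_const.mul hf)).preimage_isClosed_of_isClosed
      isClosed_Icc isClosed_Iic
  have hne : {x ∈ Icc (0 : ℝ) 1 | x + S ^ 2 * f x ≤ S}.Nonempty := by
    by_contra h
    rw [Set.not_nonempty_iff_eq_empty] at h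
    rw [aggregateResponse, h, Real.sSup_empty] at hpos
    exact hpos.false
  exact (hclosed.csSup_mem hne (bddAbove_Icc.mono (sep_subset _ _))).2

theorem le_aggregateResponse_add_sq_mul (hf : ContinuousOn f (Icc 0 1)) (h1 : 1 ≤ f 1) :
    S ≤ aggregateResponse f S + S ^ 2 * f (aggregateResponse f S) := by
  set q := aggregateResponse f S
  obtain hq1 | hq1 : q < 1 ∨ q = 1 := aggregateResponse_le_one.lt_or_eq
  · -- to the right of `q` every point violates the constraint; pass to the limit `x → q⁺`
    have hlim : Tendsto (fun x => x + S ^ 2 * f x) (𝓝[Ioc q 1] q) (𝓝 (q + S ^ 2 * f q)) :=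
      ((continuousOn_id.add (continuousOn_const.mul hf)) q aggregateResponse_mem_Icc).mono
        (Ioc_subset_Icc_self.trans (Icc_subset_Icc_left aggregateResponse_nonneg))
    have : (𝓝[Ioc q 1] q).NeBot := left_nhdsWithin_Ioc_neBot hq1
    refine ge_of_tendsto hlim ?_
    filter_upwards [self_mem_nhdsWithin] with x hx
    exact le_of_lt (lt_of_not_ge fun hxS =>
      hx.1.not_ge (le_aggregateResponse ⟨aggregateResponse_nonneg.trans hx.1.le, hx.2⟩ hxS))
  · rw [hq1]
    nlinarith [sq_nonneg (S - 1), sq_nonneg S]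

theorem aggregateResponse_add_sq_mul_eq (hf : ContinuousOn f (Icc 0 1)) (h1 : 1 ≤ f 1)
    (hpos : 0 < aggregateResponse f S) :
    aggregateResponse f S + S ^ 2 * f (aggregateResponse f S) = S :=
  (aggregateResponse_add_sq_mul_le hf hpos).antisymm (le_aggregateResponse_add_sq_mul hf h1)

theorem sq_mul_le_sub_aggregateResponse (hm : MonotoneOn f (Icc 0 1))
    (hf : ContinuousOn f (Icc 0 1)) (h1 : 1 ≤ f 1) (hpos : 0 < aggregateResponse f S) :
    S ^ 2 * f 0 ≤ S - aggregateResponse f S := by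
  have := mul_le_mul_of_nonneg_left
    (hm (left_mem_Icc.2 zero_le_one) aggregateResponse_mem_Icc hpos.le) (sq_nonneg S)
  linarith [aggregateResponse_add_sq_mul_eq hf h1 hpos]

theorem le_sq_mul_of_aggregateResponse_eq_zero (hf : ContinuousOn f (Icc 0 1)) (h1 : 1 ≤ f 1)
    (h0 : aggregateResponse f S = 0) : S ≤ S ^ 2 * f 0 := by
  simpa [h0] using le_aggregateResponse_add_sq_mul hf h1 (S := S)

theorem continuous_aggregateResponse (hm : MonotoneOn f (Icc 0 1))
    (hf : ContinuousOn f (Icc 0 1)) :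
    Continuous (aggregateResponse f) := by
  refine continuous_iff_continuousAt.2 fun S => tendsto_order.2 ⟨fun a ha => ?_, fun b hb => ?_⟩
  · rcases lt_or_ge a 0 with ha0 | ha0
    · exact Eventually.of_forall fun S' => ha0.trans_le aggregateResponse_nonneg
    obtain ⟨x, hax, hxq⟩ := _root_.exists_between ha
    have hx : x ∈ Icc (0 : ℝ) 1 := ⟨ha0.trans hax.le, hxq.le.trans aggregateResponse_le_one⟩
    have hfx := mul_le_mul_of_nonneg_left (hm hx aggregateResponse_mem_Icc hxq.le) (sq_nonneg S)
    have hxS : x + S ^ 2 * f x < S := by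
      linarith [aggregateResponse_add_sq_mul_le hf (ha0.trans_lt (hax.trans hxq))]
    have hcont : Continuous fun S' : ℝ => x + S' ^ 2 * f x - S' := by fun_prop
    filter_upwards [hcont.continuousAt.eventually_lt continuousAt_const
      (show x + S ^ 2 * f x - S < 0 by linarith)] with S' hS'
    exact hax.trans_le (le_aggregateResponse hx (by linarith))
  · rcases lt_or_ge 1 b with h1b | hb1
    · exact Eventually.of_forall fun S' => aggregateResponse_le_one.trans_lt h1b
    obtain ⟨x, hqx, hxb⟩ := _root_.exists_between hb
    have hx : x ∈ Icc (0 : ℝ) 1 := ⟨aggregateResponse_nonneg.trans hqx.le, hxb.le.trans hb1⟩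
    have hxS : S < x + S ^ 2 * f x :=
      lt_of_not_ge fun h => hqx.not_ge (le_aggregateResponse hx h)
    have hcont : Continuous fun S' : ℝ => x + S' ^ 2 * f x - S' := by fun_prop
    filter_upwards [continuousAt_const.eventually_lt hcont.continuousAt
      (show (0 : ℝ) < x + S ^ 2 * f x - S by linarith)] with S' hS'
    exact (aggregateResponse_le hm hx (by linarith)).trans_lt hxb

theorem eventually_half_le_aggregateResponse (hm : MonotoneOn f (Icc 0 1)) :
    ∀ᶠ S in 𝓝[>] 0, S / 2 ≤ aggregateResponse f S := by
  have hsmall : ∀ᶠ S in 𝓝[>] (0 : ℝ), S ≤ 1 ∧ S * f 1 < 1 / 2 := by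
    have hlim : Tendsto (fun S : ℝ => S * f 1) (𝓝 0) (𝓝 0) := by
      simpa using (continuous_mul_const (f 1)).tendsto 0
    exact nhdsWithin_le_nhds ((eventually_le_nhds one_pos).and
      (hlim.eventually (eventually_lt_nhds (by norm_num))))
  filter_upwards [hsmall, self_mem_nhdsWithin] with S ⟨hS1, hSf⟩ (hS : 0 < S)
  have hx : S / 2 ∈ Icc (0 : ℝ) 1 := ⟨by positivity, by linarith⟩
  refine le_aggregateResponse hx ?_
  have := mul_le_mul_of_nonneg_left (hm hx ⟨zero_le_one, le_rfl⟩ hx.2) (sq_nonneg S)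
  nlinarith

end aggregateResponse

theorem exists_sum_aggregateResponse_eq {ι : Type*} [Fintype ι] (hι : 2 ≤ Fintype.card ι)
    {f : ι → ℝ → ℝ} (hm : ∀ i, MonotoneOn (f i) (Icc 0 1))
    (hf : ∀ i, ContinuousOn (f i) (Icc 0 1)) :
    ∃ S > 0, ∑ i, aggregateResponse (f i) S = S := by
  obtain ⟨S₀, hhalf, hS₀, hS₀1⟩ := ((eventually_all.2 fun i =>
    eventually_half_le_aggregateResponse (hm i)).and
    (Ioc_mem_nhdsGT one_pos)).exists
  have hn : (2 : ℝ) ≤ Fintype.card ι := by exact_mod_cast hι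
  have hcont : Continuous fun S => ∑ i, aggregateResponse (f i) S - S :=
    (continuous_finsetSum _ fun i _ => continuous_aggregateResponse (hm i) (hf i)).sub
      continuous_id
  have hlow : 0 ≤ ∑ i, aggregateResponse (f i) S₀ - S₀ := by
    have : ∑ _i : ι, S₀ / 2 ≤ ∑ i, aggregateResponse (f i) S₀ :=
      Finset.sum_le_sum fun i _ => hhalf i
    rw [sum_const, card_univ, nsmul_eq_mul] at this
    nlinarith
  have hhigh : ∑ i, aggregateResponse (f i) (Fintype.card ι) - Fintype.card ι ≤ 0 := by
    have : ∑ i, aggregateResponse (f i) (Fintype.card ι) ≤ ∑ _i : ι, (1 : ℝ) :=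
      Finset.sum_le_sum fun i _ => aggregateResponse_le_one
    rw [sum_const, card_univ, nsmul_eq_mul, mul_one] at this
    linarith
  obtain ⟨S, hS, hS0⟩ := intermediate_value_Icc' (hS₀1.trans (by linarith)) hcont.continuousOn
    ⟨hhigh, hlow⟩
  exact ⟨S, hS₀.trans_le hS.1, sub_eq_zero.1 hS0⟩

theorem card_sub_one_mul_lt_sum {ι : Type*} [Fintype ι] {a : ι → ℝ} {j : ι}
    (ha : ∀ i, 0 ≤ a i) (haj : 0 < a j)
    (hcond : (∀ j, a j / ∑ i, a i < 1 / (Fintype.card ι - 1 : ℝ)) ∨ ∀ j, a j = 0) (i : ι) :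
    (Fintype.card ι - 1 : ℝ) * a i < ∑ i, a i := by
  have hT : 0 < ∑ i, a i := haj.trans_le (single_le_sum (fun i _ => ha i) (mem_univ j))
  rcases hcond with hlt | hall
  · have hn : (0 : ℝ) < Fintype.card ι - 1 :=
      one_div_pos.1 ((div_nonneg (ha j) hT.le).trans_lt (hlt j))
    have := hlt i
    rw [div_lt_div_iff₀ hT hn] at this
    linarith
  · exact absurd (hall j) haj.ne'

theorem forall_pos_of_sum_eq {ι : Type*} [Fintype ι] {q a : ι → ℝ} {S : ℝ} (hS : 0 < S)
    (hq : ∀ i, 0 ≤ q i) (hsum : ∑ i, q i = S) (ha : ∀ i, 0 ≤ a i)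
    (hpos : ∀ i, 0 < q i → S ^ 2 * a i ≤ S - q i) (hzero : ∀ i, q i = 0 → S ≤ S ^ 2 * a i)
    (hcond : (∀ j, a j / ∑ i, a i < 1 / (Fintype.card ι - 1 : ℝ)) ∨ ∀ j, a j = 0) :
    ∀ i, 0 < q i := by
  classical
  by_contra! ⟨j, hj⟩
  have hj0 : q j = 0 := le_antisymm hj (hq j)
  have haj : 0 < a j := by
    by_contra! h
    nlinarith [hzero j hj0, mul_nonpos_of_nonneg_of_nonpos (sq_nonneg S) h]
  set n : ℝ := (Fintype.card ι : ℝ)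
  have hstrict := card_sub_one_mul_lt_sum ha haj hcond
  set C := univ.filter (0 < q ·)
  set k : ℝ := (#C : ℝ)
  have hsumC : ∑ i ∈ C, q i = S := by
    rw [← hsum, sum_filter_of_ne fun i _ hi => lt_of_le_of_ne (hq i) (Ne.symm hi)]
  have hk : 1 ≤ k := by
    have : C.Nonempty := nonempty_of_sum_ne_zero (hsumC ▸ hS.ne')
    exact Nat.one_le_cast.2 this.card_pos
  have hcard : (#Cᶜ : ℝ) = n - k := by
    rw [card_compl, Nat.cast_sub (card_le_univ C)]
  have hjC : j ∈ Cᶜ := by simp [C, hj0]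
  have hA : S ^ 2 * ∑ i ∈ C, a i ≤ k * S - S :=
    calc S ^ 2 * ∑ i ∈ C, a i = ∑ i ∈ C, S ^ 2 * a i := mul_sum _ _ _
      _ ≤ ∑ i ∈ C, (S - q i) := sum_le_sum fun i hi => hpos i (mem_filter.1 hi).2
      _ = k * S - S := by rw [sum_sub_distrib, sum_const, hsumC, nsmul_eq_mul]
  have hB : (n - k) * S ≤ S ^ 2 * ∑ i ∈ Cᶜ, a i :=
    calc (n - k) * S = ∑ i ∈ Cᶜ, S := by rw [sum_const, nsmul_eq_mul, hcard]
      _ ≤ ∑ i ∈ Cᶜ, S ^ 2 * a i :=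
        sum_le_sum fun i hi => hzero i (le_antisymm (by simpa [C] using hi) (hq i))
      _ = S ^ 2 * ∑ i ∈ Cᶜ, a i := (mul_sum _ _ _).symm
  have hN : (n - 1) * ∑ i ∈ Cᶜ, a i < (n - k) * ∑ i, a i := by
    rw [mul_sum, ← hcard, ← nsmul_eq_mul, ← sum_const]
    exact sum_lt_sum_of_nonempty ⟨j, hjC⟩ fun i _ => hstrict i
  rw [← sum_add_sum_compl C a] at hN
  have hkn : k ≤ n := Nat.cast_le.2 (card_le_univ C)
  -- `(k - 1) S² Σ_{Cᶜ} a` is both `< (n - k) S² Σ_C a ≤ (n - k)(k - 1) S` and `≥ (k - 1)(n - k) S`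
  nlinarith [mul_lt_mul_of_pos_left hN (pow_pos hS 2),
    mul_le_mul_of_nonneg_left hA (sub_nonneg.2 hkn),
    mul_le_mul_of_nonneg_left hB (sub_nonneg.2 hk)]

theorem div_add_sub_div_add_le {x y d : ℝ} (hx : 0 ≤ x) (hy : 0 < y) (hd : 0 ≤ d) :
    d / (d + y) - x / (x + y) ≤ y * (d - x) / (x + y) ^ 2 := by
  rw [div_sub_div _ _ (by positivity) (by positivity), div_le_div_iff₀ (by positivity)
    (by positivity)]
  nlinarith [mul_nonneg (mul_nonneg hy.le (sq_nonneg (d - x)))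
    (add_pos_of_nonneg_of_pos hx hy).le]

theorem pmUtility_update_le {n : ℕ} {c : Fin n → ℝ → ℝ} {q : Fin n → ℝ} {i : Fin n} {d : ℝ}
    (hc : ConvexOn ℝ (Icc 0 1) (c i)) (hdiff : DifferentiableWithinAt ℝ (c i) (Icc 0 1) (q i))
    (hqi : q i ∈ Icc (0 : ℝ) 1) (hlt : q i < ∑ j, q j)
    (hfoc : (∑ j, q j - q i) / (∑ j, q j) ^ 2 = derivWithin (c i) (Icc 0 1) (q i))
    (hd : d ∈ Icc (0 : ℝ) 1) :
    pmUtility c (Function.update q i d) i ≤ pmUtility c q i := by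
  set y := ∑ j, q j - q i
  have hsum : ∑ j, q j = q i + y := by ring
  have hsum' : ∑ j, Function.update q i d j = d + y := by
    simp only [y]
    rw [sum_update_of_mem (mem_univ i), sdiff_singleton_eq_erase,
      ← add_sum_erase _ q (mem_univ i)]
    ring
  have hshare := div_add_sub_div_add_le hqi.1 (sub_pos.2 hlt) hd.1
  have hcost := hc.derivWithin_mul_sub_le hqi hd hdiff
  rw [← hfoc, hsum] at hcost
  simp only [pmUtility, Function.update_self, hsum', hsum]
  rw [div_mul_eq_mul_div] at hcost
  linarith

/-- Sufficient condition for a contributing equilibrium under the proportional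
mechanism: if `c_j'(0) / Σ_i c_i'(0) < 1/(n−1)` for every `j` (or all `c_j'(0) = 0`),
then there exists a Nash equilibrium in which every player's quality is strictly
positive. -/
theorem contributing_equilibrium_exists
    (n : ℕ) (hn : 2 ≤ n) (c : Fin n → ℝ → ℝ)
    (hconv : ∀ i, ConvexOn ℝ (Set.Icc (0:ℝ) 1) (c i))
    (hmonoc : ∀ i, StrictMonoOn (c i) (Set.Icc (0:ℝ) 1))
    (hc0 : ∀ i, c i 0 = 0) (hc1 : ∀ i, 1 < c i 1)
    (hdiff : ∀ i, DifferentiableOn ℝ (c i) (Set.Icc (0:ℝ) 1))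
    (hcond : (∀ j : Fin n,
        derivWithin (c j) (Set.Icc (0:ℝ) 1) 0 /
          (∑ i, derivWithin (c i) (Set.Icc (0:ℝ) 1) 0) < 1 / (n - 1 : ℝ)) ∨
      (∀ j : Fin n, derivWithin (c j) (Set.Icc (0:ℝ) 1) 0 = 0)) :
    ∃ q : Fin n → ℝ, (∀ i, 0 < q i ∧ q i ≤ 1) ∧
      (∀ i : Fin n, ∀ d ∈ Set.Icc (0:ℝ) 1,
        pmUtility c (Function.update q i d) i ≤ pmUtility c q i) := by
  set f := fun i => derivWithin (c i) (Icc (0 : ℝ) 1)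
  have hm i : MonotoneOn (f i) (Icc 0 1) := (hconv i).monotoneOn_derivWithin (hdiff i)
  have hcont i : ContinuousOn (f i) (Icc 0 1) := (hconv i).continuousOn_derivWithin (hdiff i)
  have hf1 i : 1 ≤ f i 1 := by
    have := (hconv i).derivWithin_mul_sub_le (right_mem_Icc.2 zero_le_one)
      (left_mem_Icc.2 zero_le_one) (hdiff i 1 (right_mem_Icc.2 zero_le_one))
    linarith [hc0 i, hc1 i]
  obtain ⟨S, hS, hsum⟩ := exists_sum_aggregateResponse_eq (by simpa using hn) hm hcont
  set q := fun i => aggregateResponse (f i) S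
  have hpos : ∀ i, 0 < q i :=
    forall_pos_of_sum_eq hS (fun i => aggregateResponse_nonneg) hsum
      (fun i => (hmonoc i).monotoneOn.derivWithin_nonneg)
      (fun i => sq_mul_le_sub_aggregateResponse (hm i) (hcont i) (hf1 i))
      (fun i => le_sq_mul_of_aggregateResponse_eq_zero (hcont i) (hf1 i)) (by simpa using hcond)
  have : Nontrivial (Fin n) := Fin.nontrivial_iff_two_le.2 hn
  have hlt i : q i < ∑ j, q j := by
    obtain ⟨j, hj⟩ := exists_ne i
    exact single_lt_sum hj (mem_univ i) (mem_univ j) (hpos j) fun k _ _ => (hpos k).le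
  refine ⟨q, fun i => ⟨hpos i, aggregateResponse_le_one⟩, fun i d hd =>
    pmUtility_update_le (hconv i) (hdiff i _ aggregateResponse_mem_Icc) aggregateResponse_mem_Icc
      (hlt i) ?_ hd⟩
  rw [hsum, div_eq_iff (pow_pos hS 2).ne']
  linarith [aggregateResponse_add_sq_mul_eq (hcont i) (hf1 i) (hpos i)]
end

section
/- In a contributing equilibrium of the proportional mechanism facilitated by n homogeneous players with cost c̄, the total quality β* = Σ q_i^* satisfies β* < 1/c̄'(0) (when c̄'(0) > 0) and 1/β* → c̄'(0) as n → ∞. -/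
open Filter Topology

/-!
Convexity makes `c̄'` nondecreasing, so the first-order condition, which reads
`β* · c̄'(q*) = (n - 1)/n`, gives `β* · c̄'(0) ≤ (n - 1)/n < 1`; in particular `q* < 1/(n c̄'(0)) → 0`.
The derivative of a convex differentiable function is right-continuous at the left endpoint `a`:
`c̄'(a) ≤ c̄'(x) ≤ slope c̄ x (2x - a) = 2 · slope c̄ a (2x - a) - slope c̄ a x → c̄'(a)`.
Hence `1/β* = n/(n - 1) · c̄'(q*) → c̄'(0)`.
-/

theorem slope_two_mul_sub_eq (f : ℝ → ℝ) {a x : ℝ} (hxa : x ≠ a) :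
    slope f x (2 * x - a) = 2 * slope f a (2 * x - a) - slope f a x := by
  have h₁ : x - a ≠ 0 := sub_ne_zero.mpr hxa
  have h₂ : 2 * x - a - a ≠ 0 := by contrapose! h₁; linarith
  have h₃ : 2 * x - a - x ≠ 0 := by contrapose! h₁; linarith
  simp only [slope_def_field]
  field_simp
  ring

theorem ConvexOn.tendsto_deriv_nhdsGT {f : ℝ → ℝ} {a b : ℝ} (hab : a < b)
    (hf : ConvexOn ℝ (Set.Icc a b) f) (hfd : ∀ x ∈ Set.Icc a b, DifferentiableAt ℝ f x) :
    Tendsto (deriv f) (𝓝[>] a) (𝓝 (deriv f a)) := by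
  have ha : a ∈ Set.Icc a b := Set.left_mem_Icc.mpr hab.le
  have hslope : Tendsto (slope f a) (𝓝[>] a) (𝓝 (deriv f a)) :=
    (hasDerivAt_iff_tendsto_slope.mp (hfd a ha).hasDerivAt).mono_left (nhdsGT_le_nhdsNE a)
  have hreflect : Tendsto (fun x => 2 * x - a) (𝓝[>] a) (𝓝[>] a) := by
    refine tendsto_nhdsWithin_iff.mpr ⟨?_, ?_⟩
    · have : Tendsto (fun x : ℝ => 2 * x - a) (𝓝 a) (𝓝 (2 * a - a)) :=
        (continuous_const.mul continuous_id).sub continuous_const |>.tendsto a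
      simpa [two_mul] using this.mono_left nhdsWithin_le_nhds
    · filter_upwards [self_mem_nhdsWithin] with x (hx : a < x)
      show a < 2 * x - a
      linarith
  have hupper : Tendsto (fun x => 2 * slope f a (2 * x - a) - slope f a x) (𝓝[>] a)
      (𝓝 (deriv f a)) := by
    simpa [two_mul] using ((hslope.comp hreflect).const_mul 2).sub hslope
  refine tendsto_of_tendsto_of_tendsto_of_le_of_le' tendsto_const_nhds hupper ?_ ?_
  · filter_upwards [Ioo_mem_nhdsGT hab] with x hx
    exact hf.monotoneOn_deriv hfd ha (Set.Ioo_subset_Icc_self hx) hx.1.le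
  · filter_upwards [Ioo_mem_nhdsGT (show a < (a + b) / 2 by linarith)] with x ⟨hax, hxm⟩
    have hx : x ∈ Set.Icc a b := ⟨hax.le, by linarith⟩
    have hx' : 2 * x - a ∈ Set.Icc a b := ⟨by linarith, by linarith⟩
    rw [← slope_two_mul_sub_eq f hax.ne']
    exact hf.deriv_le_slope hx hx' (by linarith) (hfd x hx)

section FirstOrderCondition

variable {n q d : ℝ}

theorem total_quality_mul_eq_of_foc (hn : n ≠ 0) (hq : q ≠ 0)
    (hFOC : (n - 1) * q / (n * q) ^ 2 = d) : n * q * d = (n - 1) / n := by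
  rw [← hFOC]
  field_simp

theorem total_quality_lt_of_foc {d₀ : ℝ} (hn : 0 < n) (hq : 0 < q) (hd₀ : 0 < d₀) (hd : d₀ ≤ d)
    (hFOC : (n - 1) * q / (n * q) ^ 2 = d) : n * q < 1 / d₀ := by
  rw [lt_div_iff₀ hd₀]
  calc n * q * d₀ ≤ n * q * d := by gcongr
    _ = (n - 1) / n := total_quality_mul_eq_of_foc hn.ne' hq.ne' hFOC
    _ < 1 := by rw [div_lt_one hn]; linarith

theorem one_div_total_quality_eq_of_foc (hn : n ≠ 0) (hn₁ : n - 1 ≠ 0) (hq : q ≠ 0)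
    (hFOC : (n - 1) * q / (n * q) ^ 2 = d) : 1 / (n * q) = n / (n - 1) * d := by
  rw [← hFOC]
  field_simp

end FirstOrderCondition

theorem homogeneous_total_quality_limit_general
    (cbar : ℝ → ℝ)
    (hconv : ConvexOn ℝ (Set.Icc (0:ℝ) 1) cbar)
    (hdiff : Differentiable ℝ cbar)
    (hd0 : 0 < deriv cbar 0)
    (qstar : ℕ → ℝ)
    (hpos : ∀ n : ℕ, 2 ≤ n → 0 < qstar n ∧ qstar n ≤ 1)
    (hFOC : ∀ n : ℕ, 2 ≤ n →
      ((n - 1 : ℝ) * qstar n) / ((n * qstar n) ^ 2) = deriv cbar (qstar n)) :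
    (∀ n : ℕ, 2 ≤ n → (n : ℝ) * qstar n < 1 / deriv cbar 0) ∧
      Tendsto (fun n : ℕ => 1 / ((n : ℝ) * qstar n)) atTop (nhds (deriv cbar 0)) := by
  have hn_pos (n : ℕ) (hn : 2 ≤ n) : (0 : ℝ) < n := by positivity
  have hbound (n : ℕ) (hn : 2 ≤ n) : (n : ℝ) * qstar n < 1 / deriv cbar 0 :=
    total_quality_lt_of_foc (hn_pos n hn) (hpos n hn).1 hd0
      (hconv.monotoneOn_deriv (fun x _ => hdiff x) (Set.left_mem_Icc.mpr zero_le_one)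
        ⟨(hpos n hn).1.le, (hpos n hn).2⟩ (hpos n hn).1.le) (hFOC n hn)
  refine ⟨hbound, ?_⟩
  have hq : Tendsto qstar atTop (𝓝[>] 0) := by
    refine tendsto_nhdsWithin_iff.mpr ⟨?_, ?_⟩
    · refine tendsto_of_tendsto_of_tendsto_of_le_of_le' tendsto_const_nhds
        (tendsto_const_div_atTop_nhds_zero_nat (1 / deriv cbar 0)) ?_ ?_
      · filter_upwards [eventually_ge_atTop 2] with n hn using (hpos n hn).1.le
      · filter_upwards [eventually_ge_atTop 2] with n hn
        exact (lt_div_iff₀' (hn_pos n hn)).mpr (hbound n hn) |>.le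
    · filter_upwards [eventually_ge_atTop 2] with n hn using (hpos n hn).1
  have hlim := (tendsto_natCast_div_add_atTop (-1 : ℝ)).mul
    ((hconv.tendsto_deriv_nhdsGT zero_lt_one fun x _ => hdiff x).comp hq)
  rw [one_mul] at hlim
  refine hlim.congr' ?_
  filter_upwards [eventually_ge_atTop 2] with n hn
  have hn₁ : (n : ℝ) - 1 ≠ 0 := by
    have : (2 : ℝ) ≤ n := by exact_mod_cast hn
    linarith
  rw [one_div_total_quality_eq_of_foc (hn_pos n hn).ne' hn₁ (hpos n hn).1.ne' (hFOC n hn),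
    Function.comp_apply, sub_eq_add_neg]

/-- In the symmetric contributing equilibrium of the proportional mechanism with `n`
homogeneous players of cost `c̄` (the per-player quality `q* n` satisfies the
first-order condition `(n−1)q*/(n·q*)² = c̄'(q*)`), the total quality
`β* n = n·q* n` satisfies `β* n < 1/c̄'(0)` and `1/β* n → c̄'(0)` as `n → ∞`. -/
theorem homogeneous_total_quality_limit
    (cbar : ℝ → ℝ)
    (hconv : ConvexOn ℝ (Set.Icc (0:ℝ) 1) cbar)
    (hmono : StrictMonoOn cbar (Set.Icc (0:ℝ) 1))
    (hc0 : cbar 0 = 0)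
    (hdiff : Differentiable ℝ cbar)
    (hd0 : 0 < deriv cbar 0)
    (qstar : ℕ → ℝ)
    (hpos : ∀ n : ℕ, 2 ≤ n → 0 < qstar n ∧ qstar n ≤ 1)
    (hFOC : ∀ n : ℕ, 2 ≤ n →
      ((n - 1 : ℝ) * qstar n) / ((n * qstar n) ^ 2) = deriv cbar (qstar n)) :
    (∀ n : ℕ, 2 ≤ n → (n : ℝ) * qstar n < 1 / deriv cbar 0) ∧
      Tendsto (fun n : ℕ => 1 / ((n : ℝ) * qstar n)) atTop (nhds (deriv cbar 0)) :=
  homogeneous_total_quality_limit_general cbar hconv hdiff hd0 qstar hpos hFOC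
end

section
/- Barrier against a high-marginal-cost entrant: for a market of n homogeneous players with cost c̄ (c̄'(0) > 0) and any entrant k with c_k'(0) > c̄'(0), there exists N such that for all n ≥ N, in the equilibrium of the (n+1)-player game the entrant plays q_k^* = 0 while all homogeneous players contribute. -/
open Finset

/-! In an equilibrium with total quality `S`, halving a positive contribution `x` loses less than
`x / (2S)` of share but saves at least `c(x) / 2 ≥ c'(0) x / 2` of cost, so `c'(0) < 1 / S`;
conversely a player staying at `0` against small deviations needs `1 / S ≤ c'(0)`. So a player
contributes exactly when its marginal cost at `0` is below `1 / S`. As `S > 0` (at `S = 0` any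
player would take the whole share at almost no cost) and `c̄'(0) < c_k'(0)`, every incumbent
contributes and `S < 1 / c̄'(0)`. The smallest incumbent then plays some `x ≤ S / n`, tiny for
large `n`, and doubling it must not pay: `(n - 1) / (n + 1) ≤ S · slope c̄ x (2x)`. That slope is
close to `c̄'(0) < c_k'(0)`, so for large `n` we get `1 / S ≤ c_k'(0)` and the entrant stays out. -/

open Filter Topology

lemma ConvexOn.slope_two_mul_le {c : ℝ → ℝ} (hconv : ConvexOn ℝ (Set.Icc 0 1) c) {x δ : ℝ}
    (hx : 0 < x) (hxδ : x ≤ δ) (hδ : 2 * δ ≤ 1) :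
    slope c x (2 * x) ≤ slope c δ (2 * δ) := by
  have mem : ∀ {t y : ℝ}, 0 < t → t ≤ 1 → t ≠ y → t ∈ Set.Icc (0 : ℝ) 1 \ {y} :=
    fun h0 h1 hne => ⟨⟨h0.le, h1⟩, hne⟩
  calc slope c x (2 * x) ≤ slope c x (2 * δ) :=
        hconv.slope_mono ⟨hx.le, by linarith⟩
          (mem (by linarith) (by linarith) (ne_of_gt (by linarith)))
          (mem (by linarith) hδ (ne_of_gt (by linarith))) (by linarith)
    _ = slope c (2 * δ) x := slope_comm _ _ _
    _ ≤ slope c (2 * δ) δ :=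
        hconv.slope_mono ⟨by linarith, hδ⟩ (mem hx (by linarith) (ne_of_lt (by linarith)))
          (mem (by linarith) (by linarith) (ne_of_lt (by linarith))) hxδ
    _ = slope c δ (2 * δ) := slope_comm _ _ _

lemma ConvexOn.exists_slope_two_mul_lt {c : ℝ → ℝ} (hconv : ConvexOn ℝ (Set.Icc 0 1) c)
    (hc0 : c 0 = 0) (hd : DifferentiableAt ℝ c 0) {b : ℝ} (hb : deriv c 0 < b) :
    ∃ δ, 0 < δ ∧ 2 * δ ≤ 1 ∧ slope c δ (2 * δ) < b := by
  obtain ⟨u, hu, hu0, hu1⟩ :=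
    (((hasDerivAt_iff_tendsto_slope_left_right.mp hd.hasDerivAt).2.eventually_lt_const
      (by linarith : deriv c 0 < (deriv c 0 + b) / 2)).and (Ioc_mem_nhdsGT one_pos)).exists
  refine ⟨u / 2, by positivity, by linarith, ?_⟩
  have hlow := hconv.deriv_le_slope ⟨le_rfl, zero_le_one⟩ ⟨by positivity, by linarith⟩
    (by positivity : (0 : ℝ) < u / 2) hd
  rw [slope_def_field] at hu hlow ⊢
  rw [show 2 * (u / 2) = u by ring, show u - u / 2 = u / 2 by ring]
  rw [hc0, sub_zero, sub_zero] at hu hlow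
  -- the slope on `[δ, 2δ]` is twice that on `[0, 2δ]` minus that on `[0, δ]`, which is `≥ c'(0)`
  have : (c u - c (u / 2)) / (u / 2) = 2 * (c u / u) - c (u / 2) / (u / 2) := by
    field_simp
  linarith

/-- `x` is a best response in `[0, 1]` when the other players contribute `s` in total. -/
def IsBestResponse (c : ℝ → ℝ) (s x : ℝ) : Prop :=
  ∀ d ∈ Set.Icc (0 : ℝ) 1, d / (s + d) - c d ≤ x / (s + x) - c x

section BestResponse

variable {c : ℝ → ℝ} {s x : ℝ}

lemma not_isBestResponse_zero_zero (hc : ContinuousAt c 0) (hc0 : c 0 = 0) :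
    ¬ IsBestResponse c 0 0 := by
  intro h
  have hsmall : ∀ᶠ d in 𝓝[>] (0 : ℝ), c d < 1 ∧ d ∈ Set.Ioc (0 : ℝ) 1 :=
    ((hc.tendsto.mono_left nhdsWithin_le_nhds).eventually_lt_const (by rw [hc0]; norm_num)).and
      (Ioc_mem_nhdsGT one_pos)
  obtain ⟨d, hcd, hd0, hd1⟩ := hsmall.exists
  have := h d ⟨hd0.le, hd1⟩
  rw [zero_add, div_self hd0.ne', zero_add, div_zero, hc0] at this
  linarith

lemma IsBestResponse.deriv_lt (h : IsBestResponse c s x) (hconv : ConvexOn ℝ (Set.Icc 0 1) c)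
    (hc0 : c 0 = 0) (hd : DifferentiableAt ℝ c 0) (hs : 0 ≤ s) (hx : 0 < x) (hx1 : x ≤ 1) :
    deriv c 0 < 1 / (s + x) := by
  have h0 : (0 : ℝ) ∈ Set.Icc 0 1 := ⟨le_rfl, zero_le_one⟩
  have hxI : x ∈ Set.Icc (0 : ℝ) 1 := ⟨hx.le, hx1⟩
  have hhalf : c (x / 2) ≤ c x / 2 := by
    have := hconv.2 h0 hxI (by norm_num : (0 : ℝ) ≤ 1 / 2) (by norm_num : (0 : ℝ) ≤ 1 / 2)
      (by norm_num)
    simp only [smul_eq_mul, mul_zero, zero_add, hc0] at this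
    rwa [one_div_mul_eq_div, one_div_mul_eq_div] at this
  have hlin : deriv c 0 * x ≤ c x := by
    have := hconv.deriv_le_slope h0 hxI hx hd
    rwa [slope_def_field, hc0, sub_zero, sub_zero, le_div_iff₀ hx] at this
  have hdev := h (x / 2) ⟨by positivity, by linarith⟩
  have hloss : x / (s + x) - x / 2 / (s + x / 2) < x / (2 * (s + x)) := by
    rw [div_sub_div _ _ (by positivity) (by positivity),
      div_lt_div_iff₀ (by positivity) (by positivity)]
    nlinarith [mul_pos hx hx, mul_pos (mul_pos hx hx) hx, mul_nonneg (mul_nonneg hs hx.le) hx.le]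
  have hmul : deriv c 0 * x < 1 / (s + x) * x :=
    calc deriv c 0 * x ≤ 2 * (x / (s + x) - x / 2 / (s + x / 2)) := by linarith
      _ < 2 * (x / (2 * (s + x))) := by linarith
      _ = 1 / (s + x) * x := by field_simp
  exact lt_of_mul_lt_mul_right hmul hx.le

lemma IsBestResponse.one_div_le_deriv (h : IsBestResponse c s 0) (hc0 : c 0 = 0)
    (hd : DifferentiableAt ℝ c 0) (hs : 0 < s) :
    1 / s ≤ deriv c 0 := by
  have hprice : Tendsto (fun d => 1 / (s + d)) (𝓝[>] 0) (𝓝 (1 / s)) := by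
    have : ContinuousAt (fun d => 1 / (s + d)) 0 := by fun_prop (disch := simp [hs.ne'])
    simpa using this.tendsto.mono_left nhdsWithin_le_nhds
  refine le_of_tendsto_of_tendsto hprice
    (hasDerivAt_iff_tendsto_slope_left_right.mp hd.hasDerivAt).2 ?_
  filter_upwards [Ioc_mem_nhdsGT one_pos] with d ⟨hd0, hd1⟩
  have := h d ⟨hd0.le, hd1⟩
  rw [add_zero, zero_div, hc0, sub_zero, sub_le_iff_le_add, zero_add] at this
  rwa [slope_def_field, hc0, sub_zero, sub_zero, le_div_iff₀ hd0, div_mul_eq_mul_div, one_mul]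

lemma IsBestResponse.pos_iff_deriv_lt (h : IsBestResponse c s x)
    (hconv : ConvexOn ℝ (Set.Icc 0 1) c) (hc0 : c 0 = 0) (hd : DifferentiableAt ℝ c 0)
    (hs : 0 ≤ s) (hx : x ∈ Set.Icc (0 : ℝ) 1) (hsx : 0 < s + x) :
    0 < x ↔ deriv c 0 < 1 / (s + x) := by
  refine ⟨fun hx0 => h.deriv_lt hconv hc0 hd hs hx0 hx.2, fun hlt => ?_⟩
  by_contra hx0
  obtain rfl : x = 0 := le_antisymm (not_lt.mp hx0) hx.1
  rw [add_zero] at hsx hlt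
  exact (h.one_div_le_deriv hc0 hd hsx).not_gt hlt

lemma IsBestResponse.le_mul_slope (h : IsBestResponse c s x) (hx : 0 < x) (hx1 : 2 * x ≤ 1)
    {k : ℝ} (hk : 1 ≤ k) (hxk : k * x ≤ s + x) :
    (k - 1) / (k + 1) ≤ (s + x) * slope c x (2 * x) := by
  have hs : 0 ≤ s := by nlinarith
  have hdev := h (2 * x) ⟨by positivity, hx1⟩
  have hgain : s / ((s + x) * (s + 2 * x)) ≤ slope c x (2 * x) := by
    rw [slope_def_field, show 2 * x - x = x by ring, le_div_iff₀ hx]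
    calc s / ((s + x) * (s + 2 * x)) * x = 2 * x / (s + 2 * x) - x / (s + x) := by
          field_simp; ring
      _ ≤ c (2 * x) - c x := by linarith
  have hshare : (k - 1) / (k + 1) ≤ s / (s + 2 * x) := by
    rw [div_le_div_iff₀ (by linarith) (by positivity)]
    nlinarith
  calc (k - 1) / (k + 1) ≤ s / (s + 2 * x) := hshare
    _ = (s + x) * (s / ((s + x) * (s + 2 * x))) := by field_simp
    _ ≤ (s + x) * slope c x (2 * x) := by gcongr

lemma IsBestResponse.one_le_mul_of_le (h : IsBestResponse c s x)
    (hconv : ConvexOn ℝ (Set.Icc 0 1) c) (hx : 0 < x) {δ b k : ℝ} (hxδ : x ≤ δ)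
    (hδ : 2 * δ ≤ 1) (hb : slope c δ (2 * δ) < b) (hk : 1 < k)
    (hkb : (b + slope c δ (2 * δ)) / (b - slope c δ (2 * δ)) ≤ k) (hxk : k * x ≤ s + x) :
    1 ≤ (s + x) * b := by
  have hS : 0 ≤ s + x := by nlinarith
  have hSL : (k - 1) / (k + 1) ≤ (s + x) * slope c δ (2 * δ) :=
    (h.le_mul_slope hx (by linarith) hk.le hxk).trans
      (mul_le_mul_of_nonneg_left (hconv.slope_two_mul_le hx hxδ hδ) hS)
  rw [div_le_iff₀ (by linarith)] at hSL
  rw [div_le_iff₀ (sub_pos.mpr hb)] at hkb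
  nlinarith

end BestResponse

lemma sum_update_eq {ι : Type*} [Fintype ι] [DecidableEq ι] (q : ι → ℝ) (i : ι) (d : ℝ) :
    ∑ j, Function.update q i d j = ∑ j, q j - q i + d := by
  rw [sum_update_of_mem (mem_univ i), ← sum_erase_eq_sub (mem_univ i),
    sdiff_singleton_eq_erase, add_comm]

section Market

variable {m : ℕ} {c : Fin m → ℝ → ℝ} {q : Fin m → ℝ}

lemma isBestResponse_of_forall_pmUtility_le {i : Fin m}
    (h : ∀ d ∈ Set.Icc (0 : ℝ) 1, pmUtility c (Function.update q i d) i ≤ pmUtility c q i) :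
    IsBestResponse (c i) (∑ j, q j - q i) (q i) := by
  intro d hd
  simpa only [pmUtility, Function.update_self, sum_update_eq, sub_add_cancel] using h d hd

lemma sum_pos_of_isBestResponse (hbr : ∀ i, IsBestResponse (c i) (∑ j, q j - q i) (q i))
    (hq : ∀ i, 0 ≤ q i) (i : Fin m) (hc : ContinuousAt (c i) 0) (hc0 : c i 0 = 0) :
    0 < ∑ j, q j := by
  refine (sum_nonneg fun j _ => hq j).lt_of_ne fun hS => ?_
  have hzero : ∀ j, q j = 0 := fun j =>
    (sum_eq_zero_iff_of_nonneg fun j _ => hq j).mp hS.symm j (mem_univ j)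
  have := hbr i
  rw [← hS, hzero i, sub_zero] at this
  exact not_isBestResponse_zero_zero hc hc0 this

lemma pos_iff_deriv_lt_of_isBestResponse
    (hbr : ∀ i, IsBestResponse (c i) (∑ j, q j - q i) (q i))
    (hq : ∀ i, q i ∈ Set.Icc (0 : ℝ) 1) (hconv : ∀ i, ConvexOn ℝ (Set.Icc 0 1) (c i))
    (hc0 : ∀ i, c i 0 = 0) (hd : ∀ i, DifferentiableAt ℝ (c i) 0) (hS : 0 < ∑ j, q j)
    (i : Fin m) :
    0 < q i ↔ deriv (c i) 0 < 1 / ∑ j, q j := by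
  have hs : 0 ≤ ∑ j, q j - q i :=
    sub_nonneg.mpr (single_le_sum (fun j _ => (hq j).1) (mem_univ i))
  simpa only [sub_add_cancel] using
    (hbr i).pos_iff_deriv_lt (hconv i) (hc0 i) (hd i) hs (hq i) (by rwa [sub_add_cancel])

lemma lt_one_div_sum_of_forall_le_deriv (hS : 0 < ∑ j, q j)
    (hpos : ∀ i, 0 < q i → deriv (c i) 0 < 1 / ∑ j, q j) {a : ℝ}
    (ha : ∀ i, a ≤ deriv (c i) 0) :
    a < 1 / ∑ j, q j := by
  obtain ⟨p, -, hp⟩ :=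
    exists_lt_of_sum_lt (by simpa using hS : ∑ _j : Fin m, (0 : ℝ) < ∑ j, q j)
  exact (ha p).trans_lt (hpos p hp)

end Market

lemma exists_castSucc_mul_le_sum {n : ℕ} (hn : 0 < n) {q : Fin (n + 1) → ℝ}
    (hq : ∀ i, 0 ≤ q i) :
    ∃ i : Fin n, n * q i.castSucc ≤ ∑ j, q j := by
  have hsum : ∑ i : Fin n, q i.castSucc ≤ ∑ _i : Fin n, (∑ j, q j) / n := by
    rw [sum_const, card_univ, Fintype.card_fin, nsmul_eq_mul,
      mul_div_cancel₀ _ (by positivity), Fin.sum_univ_castSucc q]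
    linarith [hq (Fin.last n)]
  obtain ⟨i, -, hi⟩ := exists_le_of_sum_le (univ_nonempty_iff.mpr ⟨⟨0, hn⟩⟩) hsum
  exact ⟨i, by rwa [le_div_iff₀' (by positivity)] at hi⟩

lemma one_le_sum_mul_of_forall_castSucc_pos {n : ℕ} {c : Fin (n + 1) → ℝ → ℝ}
    {q : Fin (n + 1) → ℝ} {cbar : ℝ → ℝ} (hbr : ∀ i, IsBestResponse (c i) (∑ j, q j - q i) (q i))
    (hq : ∀ i, 0 ≤ q i) (hinc : ∀ i : Fin n, c i.castSucc = cbar)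
    (hconv : ConvexOn ℝ (Set.Icc 0 1) cbar) (hpos : ∀ i : Fin n, 0 < q i.castSucc)
    {δ b : ℝ} (hδ : 2 * δ ≤ 1) (hb : slope cbar δ (2 * δ) < b) (hSδ : ∑ j, q j ≤ n * δ)
    (hn : 1 < (n : ℝ)) (hnb : (b + slope cbar δ (2 * δ)) / (b - slope cbar δ (2 * δ)) ≤ n) :
    1 ≤ (∑ j, q j) * b := by
  obtain ⟨i, hi⟩ := exists_castSucc_mul_le_sum (by exact_mod_cast (by linarith : (0 : ℝ) < n)) hq
  have hxδ : q i.castSucc ≤ δ := le_of_mul_le_mul_left (hi.trans hSδ) (by linarith)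
  have := (hinc i ▸ hbr i.castSucc).one_le_mul_of_le hconv (hpos i) hxδ hδ hb hn hnb
    (by rwa [sub_add_cancel])
  rwa [sub_add_cancel] at this

theorem barrier_against_high_marginal_cost_entrant_general
    (cbar ck : ℝ → ℝ)
    (hconv : ConvexOn ℝ (Set.Icc (0:ℝ) 1) cbar)
    (hc0 : cbar 0 = 0) (hdiffb : Differentiable ℝ cbar)
    (hkconv : ConvexOn ℝ (Set.Icc (0:ℝ) 1) ck)
    (hk0 : ck 0 = 0) (hdiffk : Differentiable ℝ ck)
    (hd0 : 0 < deriv cbar 0)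
    (hgap : deriv cbar 0 < deriv ck 0) :
    ∃ N : ℕ, ∀ n : ℕ, N ≤ n →
      ∀ q : Fin (n + 1) → ℝ, (∀ i, q i ∈ Set.Icc (0:ℝ) 1) →
        (∀ i : Fin (n + 1), ∀ d ∈ Set.Icc (0:ℝ) 1,
          pmUtility (fun i => if i = Fin.last n then ck else cbar)
              (Function.update q i d) i ≤
            pmUtility (fun i => if i = Fin.last n then ck else cbar) q i) →
        q (Fin.last n) = 0 ∧ ∀ i : Fin n, 0 < q i.castSucc := by
  obtain ⟨δ, hδ, hδ1, hL⟩ := hconv.exists_slope_two_mul_lt hc0 (hdiffb 0) hgap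
  set L := slope cbar δ (2 * δ)
  refine ⟨⌈max 2 (max (1 / (deriv cbar 0 * δ)) ((deriv ck 0 + L) / (deriv ck 0 - L)))⌉₊,
    fun n hn q hq heq => ?_⟩
  obtain ⟨hn2, hnδ, hnL⟩ := by simpa only [max_le_iff] using Nat.ceil_le.mp hn
  set c : Fin (n + 1) → ℝ → ℝ := fun i => if i = Fin.last n then ck else cbar
  have hcost : ∀ i, ConvexOn ℝ (Set.Icc 0 1) (c i) ∧ c i 0 = 0 ∧
      DifferentiableAt ℝ (c i) 0 ∧ deriv cbar 0 ≤ deriv (c i) 0 := by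
    intro i
    simp only [c]
    split_ifs
    exacts [⟨hkconv, hk0, hdiffk 0, hgap.le⟩, ⟨hconv, hc0, hdiffb 0, le_rfl⟩]
  have hinc : ∀ i : Fin n, c i.castSucc = cbar := fun i => if_neg (Fin.castSucc_lt_last i).ne
  have hbr i := isBestResponse_of_forall_pmUtility_le (heq i)
  have hS := sum_pos_of_isBestResponse hbr (fun i => (hq i).1) (Fin.last n)
    (hcost _).2.2.1.continuousAt (hcost _).2.1
  have hiff := pos_iff_deriv_lt_of_isBestResponse hbr hq (fun i => (hcost i).1)
    (fun i => (hcost i).2.1) (fun i => (hcost i).2.2.1) hS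
  have haS := lt_one_div_sum_of_forall_le_deriv hS (fun i => (hiff i).mp)
    fun i => (hcost i).2.2.2
  have hincpos : ∀ i : Fin n, 0 < q i.castSucc := fun i => (hiff _).mpr (by rwa [hinc])
  have hSδ : ∑ j, q j ≤ n * δ := by
    rw [div_le_iff₀ (by positivity)] at hnδ
    rw [lt_div_iff₀ hS] at haS
    nlinarith
  have hSb := one_le_sum_mul_of_forall_castSucc_pos hbr (fun i => (hq i).1) hinc hconv hincpos
    hδ1 hL hSδ (by linarith) hnL
  refine ⟨le_antisymm (not_lt.mp fun hk => ?_) (hq _).1, hincpos⟩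
  have hkb := (hiff (Fin.last n)).mp hk
  rw [show c (Fin.last n) = ck from if_pos rfl, lt_div_iff₀ hS] at hkb
  linarith

/-- Barrier against a high-marginal-cost entrant: if `n` homogeneous players have cost
`c̄` with `c̄'(0) > 0` and the entrant's cost `c_k` satisfies `c_k'(0) > c̄'(0)`, then
for all sufficiently large `n`, in any Nash equilibrium of the `(n+1)`-player game the
entrant plays `0` while every homogeneous player contributes strictly positive quality. -/
theorem barrier_against_high_marginal_cost_entrant
    (cbar ck : ℝ → ℝ)
    (hconv : ConvexOn ℝ (Set.Icc (0:ℝ) 1) cbar)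
    (hmono : StrictMonoOn cbar (Set.Icc (0:ℝ) 1))
    (hc0 : cbar 0 = 0) (hdiffb : Differentiable ℝ cbar)
    (hkconv : ConvexOn ℝ (Set.Icc (0:ℝ) 1) ck)
    (hkmono : StrictMonoOn ck (Set.Icc (0:ℝ) 1))
    (hk0 : ck 0 = 0) (hdiffk : Differentiable ℝ ck)
    (hd0 : 0 < deriv cbar 0)
    (hgap : deriv cbar 0 < deriv ck 0) :
    ∃ N : ℕ, ∀ n : ℕ, N ≤ n →
      ∀ q : Fin (n + 1) → ℝ, (∀ i, q i ∈ Set.Icc (0:ℝ) 1) →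
        (∀ i : Fin (n + 1), ∀ d ∈ Set.Icc (0:ℝ) 1,
          pmUtility (fun i => if i = Fin.last n then ck else cbar)
              (Function.update q i d) i ≤
            pmUtility (fun i => if i = Fin.last n then ck else cbar) q i) →
        q (Fin.last n) = 0 ∧ ∀ i : Fin n, 0 < q i.castSucc :=
  barrier_against_high_marginal_cost_entrant_general cbar ck hconv hc0 hdiffb hkconv hk0 hdiffk hd0
    hgap
end

section
/- Mean-improving transfer lemma: let φ : [0, 1] → ℝ be positive and decreasing, and let 0 ≤ j < i ≤ n−1. Then ∫_0^1 φ(y)·[C(n-1,i)·y^{n-1-i}(1-y)^i − C(n-1,j)·y^{n-1-j}(1-y)^j] dy ≥ 0. -/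
/-!
The two terms of the integrand are the Bernstein basis polynomials `b_{n-1,n-1-i}` and
`b_{n-1,n-1-j}`. All Bernstein basis polynomials of degree `m` have integral `1/(m+1)` over
`[0,1]`, so their difference `g` integrates to `0`. Since `b_p / b_q` is decreasing for `p < q`,
`g` changes sign exactly once, from `+` to `-`, at some `c`. Then
`∫ φ g = ∫ (φ - φ c) g`, and `(φ - φ c) g ≥ 0` pointwise because `φ` is decreasing.
-/

open intervalIntegral Set Polynomial

theorem integral_mul_nonneg_of_antitoneOn_of_sign_change {φ g : ℝ → ℝ} {a b c : ℝ}
    (hc : c ∈ Icc a b) (hφ : AntitoneOn φ (Icc a b)) (hg : ContinuousOn g (Icc a b))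
    (hg0 : ∫ x in a..b, g x = 0) (hpos : ∀ x ∈ Icc a c, 0 ≤ g x)
    (hneg : ∀ x ∈ Icc c b, g x ≤ 0) :
    0 ≤ ∫ x in a..b, φ x * g x := by
  have hab : a ≤ b := hc.1.trans hc.2
  have hg' : ContinuousOn g (uIcc a b) := by rwa [uIcc_of_le hab]
  have hφc : IntervalIntegrable (fun x => φ x - φ c) MeasureTheory.volume a b :=
    (hφ.mono (uIcc_of_le hab).subset).intervalIntegrable.sub intervalIntegrable_const
  have hsplit : ∫ x in a..b, φ x * g x = ∫ x in a..b, (φ x - φ c) * g x :=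
    calc ∫ x in a..b, φ x * g x = ∫ x in a..b, ((φ x - φ c) * g x + φ c * g x) := by
          simp only [sub_mul, sub_add_cancel]
      _ = ∫ x in a..b, (φ x - φ c) * g x := by
          rw [integral_add (hφc.mul_continuousOn hg') (hg'.intervalIntegrable.const_mul (φ c)),
            integral_const_mul, hg0, mul_zero, add_zero]
  rw [hsplit]
  refine integral_nonneg hab fun x hx => ?_
  rcases le_total x c with hxc | hcx
  · exact mul_nonneg (sub_nonneg.2 (hφ hx hc hxc)) (hpos x ⟨hx.1, hxc⟩)
  · exact mul_nonneg_of_nonpos_of_nonpos (sub_nonpos.2 (hφ hc hx hcx)) (hneg x ⟨hcx, hx.2⟩)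

theorem MonotoneOn.exists_nonpos_nonneg {h : ℝ → ℝ} {a b : ℝ} (hab : a ≤ b)
    (hmono : MonotoneOn h (Icc a b)) (hcont : ContinuousOn h (Icc a b)) (ha : h a ≤ 0)
    (hb : 0 ≤ h b) :
    ∃ c ∈ Icc a b, (∀ x ∈ Icc a c, h x ≤ 0) ∧ ∀ x ∈ Icc c b, 0 ≤ h x := by
  obtain ⟨c, hc, hc0⟩ := intermediate_value_Icc hab hcont ⟨ha, hb⟩
  refine ⟨c, hc, fun x hx => ?_, fun x hx => ?_⟩
  · exact hc0 ▸ hmono ⟨hx.1, hx.2.trans hc.2⟩ hc hx.2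
  · exact hc0 ▸ hmono hc ⟨hc.1.trans hx.1, hx.2⟩ hx.1

namespace bernsteinPolynomial

theorem eval_tsub {R : Type*} [CommRing R] {n ν : ℕ} (h : ν ≤ n) (x : R) :
    (bernsteinPolynomial R n (n - ν)).eval x = n.choose ν * x ^ (n - ν) * (1 - x) ^ ν := by
  simp [bernsteinPolynomial, Nat.choose_symm h, Nat.sub_sub_self h]

theorem integral_eval_succ {n ν : ℕ} (h : ν < n) :
    ∫ x in (0:ℝ)..1, (bernsteinPolynomial ℝ n (ν + 1)).eval x
      = ∫ x in (0:ℝ)..1, (bernsteinPolynomial ℝ n ν).eval x := by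
  -- `b_{n+1,ν+1}` vanishes at `0` and `1`, and its derivative is `(n+1) (b_{n,ν} - b_{n,ν+1})`
  have hFTC := integral_eq_sub_of_hasDerivAt
    (fun x _ => (bernsteinPolynomial ℝ (n + 1) (ν + 1)).hasDerivAt x)
    ((bernsteinPolynomial ℝ (n + 1) (ν + 1)).derivative.continuous.intervalIntegrable 0 1)
  simp only [derivative_succ_aux, eval_mul, eval_sub, eval_add, eval_natCast, eval_one,
    eval_at_0, eval_at_1] at hFTC
  rw [integral_const_mul, integral_sub ((Polynomial.continuous _).intervalIntegrable 0 1)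
    ((Polynomial.continuous _).intervalIntegrable 0 1)] at hFTC
  have hν : ν + 1 ≠ n + 1 := by omega
  simp only [hν, Nat.add_one_ne_zero, if_false, sub_zero, mul_eq_zero, sub_eq_zero] at hFTC
  exact (hFTC.resolve_left (by positivity)).symm

theorem integral_eval_eq_integral_eval_zero {n ν : ℕ} (h : ν ≤ n) :
    ∫ x in (0:ℝ)..1, (bernsteinPolynomial ℝ n ν).eval x
      = ∫ x in (0:ℝ)..1, (bernsteinPolynomial ℝ n 0).eval x := by
  induction ν with
  | zero => rfl
  | succ ν ih => rw [integral_eval_succ h, ih (by omega)]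

theorem integral_eval {n ν : ℕ} (h : ν ≤ n) :
    ∫ x in (0:ℝ)..1, (bernsteinPolynomial ℝ n ν).eval x = 1 / (n + 1) := by
  have hsum :
      ∑ ν ∈ Finset.range (n + 1), ∫ x in (0:ℝ)..1, (bernsteinPolynomial ℝ n ν).eval x
        = 1 := by
    rw [← integral_finsetSum fun _ _ => (Polynomial.continuous _).intervalIntegrable 0 1]
    simp [← eval_finsetSum, bernsteinPolynomial.sum]
  rw [Finset.sum_congr rfl fun ν hν =>
      integral_eval_eq_integral_eval_zero (Finset.mem_range_succ_iff.1 hν),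
    Finset.sum_const, Finset.card_range, nsmul_eq_mul] at hsum
  rw [integral_eval_eq_integral_eval_zero h, eq_div_iff (by positivity), mul_comm]
  exact_mod_cast hsum

theorem exists_eval_sub_sign_change {n p q : ℕ} (hpq : p < q) (hq : q ≤ n) :
    ∃ c ∈ Icc (0:ℝ) 1,
      (∀ x ∈ Icc 0 c,
        0 ≤ (bernsteinPolynomial ℝ n p).eval x - (bernsteinPolynomial ℝ n q).eval x) ∧
      ∀ x ∈ Icc c 1,
        (bernsteinPolynomial ℝ n p).eval x - (bernsteinPolynomial ℝ n q).eval x ≤ 0 := by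
  obtain ⟨k, rfl⟩ := Nat.exists_eq_add_of_lt hpq
  obtain ⟨r, rfl⟩ := Nat.exists_eq_add_of_le hq
  set h : ℝ → ℝ := fun x =>
    (p + k + 1 + r).choose (p + k + 1) * x ^ (k + 1) - (p + k + 1 + r).choose p * (1 - x) ^ (k + 1)
  have hfactor : ∀ x, (bernsteinPolynomial ℝ (p + k + 1 + r) p).eval x
      - (bernsteinPolynomial ℝ (p + k + 1 + r) (p + k + 1)).eval x
      = x ^ p * (1 - x) ^ r * -h x := by
    intro x
    rw [bernsteinPolynomial, bernsteinPolynomial, show p + k + 1 + r - p = k + 1 + r by omega,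
      show p + k + 1 + r - (p + k + 1) = r by omega]
    simp only [h, eval_mul, eval_pow, eval_sub, eval_one, eval_X, eval_natCast]
    ring
  have hmono : MonotoneOn h (Icc 0 1) := fun x hx y hy hxy => by
    have := hx.1
    have : 0 ≤ 1 - y := by linarith [hy.2]
    simp only [h]
    gcongr
  obtain ⟨c, hc, hneg, hpos⟩ :=
    hmono.exists_nonpos_nonneg zero_le_one (by fun_prop) (by simp [h]) (by simp [h])
  refine ⟨c, hc, fun x hx => ?_, fun x hx => ?_⟩
  · rw [hfactor]
    have := hx.1
    have : 0 ≤ 1 - x := by linarith [hx.2, hc.2]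
    exact mul_nonneg (by positivity) (neg_nonneg.2 (hneg x hx))
  · rw [hfactor]
    have : 0 ≤ 1 - x := by linarith [hx.2]
    have : 0 ≤ x := hc.1.trans hx.1
    exact mul_nonpos_of_nonneg_of_nonpos (by positivity) (neg_nonpos.2 (hpos x hx))

end bernsteinPolynomial

theorem mean_improving_transfer_general (n i j : ℕ) (hj : j < i) (hi : i ≤ n - 1)
    (φ : ℝ → ℝ)
    (hanti : AntitoneOn φ (Set.Icc (0:ℝ) 1)) :
    0 ≤ ∫ y in (0:ℝ)..1,
        φ y * ((Nat.choose (n-1) i : ℝ) * y ^ (n-1-i) * (1-y) ^ i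
          - (Nat.choose (n-1) j : ℝ) * y ^ (n-1-j) * (1-y) ^ j) := by
  set m := n - 1
  have hjm : j ≤ m := hj.le.trans hi
  simp_rw [← bernsteinPolynomial.eval_tsub hi, ← bernsteinPolynomial.eval_tsub hjm]
  obtain ⟨c, hc, hpos, hneg⟩ :=
    bernsteinPolynomial.exists_eval_sub_sign_change (n := m) (by omega : m - i < m - j) (by omega)
  refine integral_mul_nonneg_of_antitoneOn_of_sign_change hc hanti (by fun_prop) ?_ hpos hneg
  rw [integral_sub ((Polynomial.continuous _).intervalIntegrable 0 1)
      ((Polynomial.continuous _).intervalIntegrable 0 1),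
    bernsteinPolynomial.integral_eval (by omega), bernsteinPolynomial.integral_eval (by omega),
    sub_self]

/-- Mean-improving transfer lemma: if `φ : [0,1] → ℝ` is positive and decreasing and
`0 ≤ j < i ≤ n−1`, then
`∫₀¹ φ(y)·[C(n-1,i)y^{n-1-i}(1-y)^i − C(n-1,j)y^{n-1-j}(1-y)^j] dy ≥ 0`. -/
theorem mean_improving_transfer (n i j : ℕ) (hj : j < i) (hi : i ≤ n - 1) (hn : 2 ≤ n)
    (φ : ℝ → ℝ)
    (hpos : ∀ y ∈ Set.Icc (0:ℝ) 1, 0 < φ y)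
    (hanti : AntitoneOn φ (Set.Icc (0:ℝ) 1)) :
    0 ≤ ∫ y in (0:ℝ)..1,
        φ y * ((Nat.choose (n-1) i : ℝ) * y ^ (n-1-i) * (1-y) ^ i
          - (Nat.choose (n-1) j : ℝ) * y ^ (n-1-j) * (1-y) ^ j) :=
  mean_improving_transfer_general n i j hj hi φ hanti
end
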